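/- Let A be a Hilbert algebra and S a special subset of A, and let a ∈ A. Put S^a = {s ∈ S : s = x → a for some x ∈ A} and [a)_S = {s ∈ S : a ≤ s}. Then S^a ⊆ [a)_S, S^a is coinitial in [a)_S (for every y ∈ [a)_S there is y' ∈ S^a with y' ≤ y), and for every m ∈ A, m is the least element of [a)_S if and only if m is the least element of S^a. -/
import Mathlib


/-- A Hilbert algebra: a set with implication `imp` and constant `one`. -/
class HilbertAlgebra (A : Type*) where
  imp : A → A → A
  one : A
  imp_one : ∀ x y : A, imp x (imp y x) = one
  imp_distrib : ∀ x y z : A,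
    imp (imp x (imp y z)) (imp (imp x y) (imp x z)) = one
  imp_antisymm : ∀ x y : A, imp x y = one → imp y x = one → x = y

namespace HilbertAlgebra

variable {A : Type*} [HilbertAlgebra A]

/-- The natural order of a Hilbert algebra: `x ≤ y` iff `x → y = 1`. -/
def le (x y : A) : Prop := imp x y = one

/-- A special subset of a Hilbert algebra. -/
def IsSpecial (S : Set A) : Prop :=
  ∀ a : A, ∀ b ∈ S, ∃ p : A, imp p a ∈ S ∧ imp p b = b

theorem mp' {u v : A} (hu : u = one) (huv : imp u v = one) : v = one := by
  subst hu
  refine imp_antisymm v one ?_ huv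
  calc imp v one = imp v (imp one v) := by rw [huv]
    _ = one := imp_one v one

theorem imp_self (x : A) : imp x x = one := by
  have h1 : imp (imp x (imp (imp x x) x)) (imp (imp x (imp x x)) (imp x x)) = one :=
    imp_distrib x (imp x x) x
  have h2 : imp (imp x (imp x x)) (imp x x) = one := mp' (imp_one x (imp x x)) h1
  exact mp' (imp_one x x) h2

theorem imp_one_eq (x : A) : imp x one = one := by
  calc imp x one = imp x (imp x x) := by rw [imp_self]
    _ = one := imp_one x x

theorem mono {a b : A} (p : A) (h : imp a b = one) : imp (imp p a) (imp p b) = one := by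
  have h1 := imp_distrib p a b
  rw [h, imp_one_eq] at h1
  exact mp' rfl h1

theorem le_trans' {x y z : A} (h1 : imp x y = one) (h2 : imp y z = one) :
    imp x z = one := by
  have h3 := mono x h2
  rw [h1] at h3
  exact mp' rfl h3

/-- For a special subset `S` and `a ∈ A`, the set `S^a = {s ∈ S : s = x → a}` is
contained and coinitial in `[a)_S = {s ∈ S : a ≤ s}`, and the two sets have the
same least elements. -/
theorem special_coinitial_min (S : Set A) (hS : IsSpecial S) (a : A) :
    {s ∈ S | ∃ x : A, s = imp x a} ⊆ {s ∈ S | le a s} ∧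
    (∀ y ∈ {s ∈ S | le a s}, ∃ y' ∈ {s ∈ S | ∃ x : A, s = imp x a}, le y' y) ∧
    (∀ m : A,
      (m ∈ {s ∈ S | le a s} ∧ ∀ y ∈ {s ∈ S | le a s}, le m y) ↔
      (m ∈ {s ∈ S | ∃ x : A, s = imp x a} ∧
        ∀ y ∈ {s ∈ S | ∃ x : A, s = imp x a}, le m y)) := by
  have hsub : {s ∈ S | ∃ x : A, s = imp x a} ⊆ {s ∈ S | le a s} := by
    rintro s ⟨hsS, x, rfl⟩
    exact ⟨hsS, imp_one a x⟩
  have hcoin : ∀ y ∈ {s ∈ S | le a s},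
      ∃ y' ∈ {s ∈ S | ∃ x : A, s = imp x a}, le y' y := by
    rintro y ⟨hyS, hay⟩
    obtain ⟨p, hpS, hpy⟩ := hS a y hyS
    refine ⟨imp p a, ⟨hpS, p, rfl⟩, ?_⟩
    show imp (imp p a) y = one
    rw [← hpy]
    exact mono p hay
  refine ⟨hsub, hcoin, fun m => ⟨?_, ?_⟩⟩
  · rintro ⟨hm, hmin⟩
    obtain ⟨y', hy', hle⟩ := hcoin m hm
    have : m = y' := imp_antisymm m y' (hmin y' (hsub hy')) hle
    exact ⟨this ▸ hy', fun y hy => hmin y (hsub hy)⟩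
  · rintro ⟨hm, hmin⟩
    refine ⟨hsub hm, fun y hy => ?_⟩
    obtain ⟨y', hy', hle⟩ := hcoin y hy
    exact le_trans' (hmin y' hy') hle


end HilbertAlgebra
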